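/- Let ζ ≥ 1, p > 1, ω > 0 with ω ≥ ζ^(1-p), and let h > 0. Then exp(-ω h ζ^p) · (1 + h ζ) ≤ 1 + h ζ. More generally, for any ζ_m ≥ ζ_J ≥ 1 with ω ≥ ζ_J^(1-p), we have exp(-ω h ζ_m^p)·(1 + h ζ_m) ≤ 1 + h ζ_J whenever ζ_m ≥ ζ_J implies ω ζ_m^p ≥ ζ_m, i.e., the smoothing factor quenches the growth factor down to the level of ζ_J. -/
import Mathlib


/-- Stabilization inequality (Lemma 1): for `ζm ≥ 1`, `ζJ ≥ 1`, `p > 1`,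
`ω ≥ ζJ^(1-p)` and `h > 0`, the smoothed growth factor satisfies
`exp(-ω h ζm^p) (1 + h ζm) ≤ 1 + h ζJ`. -/
theorem stmt_0 (ζJ ζm p ω h : ℝ) (hζJ : 1 ≤ ζJ) (hζm : 1 ≤ ζm)
    (hp : 1 < p) (hω : ζJ ^ (1 - p) ≤ ω) (hh : 0 < h) :
    Real.exp (-(ω * h * ζm ^ p)) * (1 + h * ζm) ≤ 1 + h * ζJ := by
  have hζJ0 : (0:ℝ) < ζJ := by linarith
  have hζm0 : (0:ℝ) < ζm := by linarith
  have hω0 : 0 < ω := lt_of_lt_of_le (Real.rpow_pos_of_pos hζJ0 _) hω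
  have hζmp : 0 < ζm ^ p := Real.rpow_pos_of_pos hζm0 _
  -- key : ζm ≤ ζJ + ω * ζm ^ p
  have key : ζm ≤ ζJ + ω * ζm ^ p := by
    rcases le_total ζm ζJ with h1 | h1
    · nlinarith
    · -- ζm^(p-1) ≥ ζJ^(p-1)
      have hmono : ζJ ^ (p - 1) ≤ ζm ^ (p - 1) :=
        Real.rpow_le_rpow (le_of_lt hζJ0) h1 (by linarith)
      have hsplit : ζm ^ p = ζm * ζm ^ (p - 1) := by
        have h := Real.rpow_add hζm0 1 (p - 1)
        rw [Real.rpow_one] at h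
        rw [show (1:ℝ) + (p - 1) = p by ring] at h
        exact h
      have hJp : ζJ ^ (1 - p) * ζJ ^ (p - 1) = 1 := by
        rw [← Real.rpow_add hζJ0]; norm_num
      have hJp0 : 0 < ζJ ^ (1 - p) := Real.rpow_pos_of_pos hζJ0 _
      have h2 : ζm ≤ ζJ ^ (1 - p) * ζm ^ p := by
        rw [hsplit]
        calc ζm = ζm * (ζJ ^ (1 - p) * ζJ ^ (p - 1)) := by rw [hJp]; ring
          _ ≤ ζm * (ζJ ^ (1 - p) * ζm ^ (p - 1)) := by
              apply mul_le_mul_of_nonneg_left _ (le_of_lt hζm0)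
              exact mul_le_mul_of_nonneg_left hmono (le_of_lt hJp0)
          _ = ζJ ^ (1 - p) * (ζm * ζm ^ (p - 1)) := by ring
      have h3 : ζJ ^ (1 - p) * ζm ^ p ≤ ω * ζm ^ p :=
        mul_le_mul_of_nonneg_right hω (le_of_lt hζmp)
      linarith
  set a := ω * h * ζm ^ p with ha
  have ha0 : 0 < a := by positivity
  have hexp : 1 + a ≤ Real.exp a := by
    have := Real.add_one_le_exp a; linarith
  have hexp0 : 0 < Real.exp a := Real.exp_pos a
  rw [Real.exp_neg]
  rw [inv_mul_le_iff₀ hexp0]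
  have hkey2 : 1 + h * ζm ≤ (1 + h * ζJ) * (1 + a) := by
    have : h * ζm ≤ h * ζJ + a := by
      have := mul_le_mul_of_nonneg_left key (le_of_lt hh)
      rw [ha]; nlinarith
    nlinarith [mul_nonneg (mul_nonneg hh.le (le_of_lt hζJ0)) ha0.le]
  calc 1 + h * ζm ≤ (1 + h * ζJ) * (1 + a) := hkey2
    _ ≤ Real.exp a * (1 + h * ζJ) := by
        rw [mul_comm (Real.exp a)]
        exact mul_le_mul_of_nonneg_left hexp (by positivity)
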